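/- Convexity of the polygon of extremal points (Lemma 3): let S ⊆ ℤ be finite and nonempty, c : S → ℝ, P = convexHull{(c(l), l) : l ∈ S} + {(t, 0) : t ≥ 0} ⊆ ℝ², y : ℤ → ℝ, Y = {(−y(l), l) : l ∈ ℤ}, and for i ∈ ℤ let a_i be the minimal real such that P_i := P + (a_i, i) lies above Y. Assume that for every i ∈ ℤ the set P_i ∩ Y contains at least two points. Let Λ = {l ∈ ℤ : (−y(l), l) ∈ P_i for some i ∈ ℤ} be the set of second coordinates of all extremal points. Then the function l ↦ −y(l) is convex on Λ: for all l_1 < l_2 < l_3 in Λ one has (l_3 − l_1)·(−y(l_2)) ≤ (l_3 − l_2)·(−y(l_1)) + (l_2 − l_1)·(−y(l_3)). -/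

import Mathlib

/-!
Two translates exchange extremal points: if `u < v`, `j ≤ i`, `(-y u, u) ∈ P_i` and
`(-y v, v) ∈ P_j`, the two convex combinations of the corresponding points of `P` that land at
heights `v - i` and `u - j` sum to the sum of those points, so the two lower bounds imposed by `Y`
are sharp, which puts `(-y v, v)` into `P_i` and `(-y u, u)` into `P_j`.

Now let `l₁ < l₂ < l₃` be consecutive extremal heights, `P_k` the last translate containing the
point at `l₁` and `P_k'` the first containing the point at `l₃`. If `k' ≤ k`, the exchange puts
both points into `P_k`. Otherwise `k' = k + 1`: by the exchange, every extremal point of a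
translate strictly between `P_k` and `P_k'` lies strictly between heights `l₁` and `l₃`, hence at
`l₂`, while there are at least two of them. In both cases the segment joining the points of `P`
that carry `l₁` and `l₃` yields, in `P_k` and in `P_k'`, a point at height `l₂`; as both translates
lie above `Y`, this gives two upper bounds for `-y l₂`, and a weighted average of them in which
`a_k` and `a_k'` cancel is the chord inequality. The general case follows by induction on
`l₃ - l₁`, splitting at an intermediate extremal height.
-/

open Pointwise

/-- The extended Newton polygon: convex hull of the points `(c l, l)`, `l ∈ S`,
plus the ray `{(t, 0) : t ≥ 0}`. -/
def NewtonPolygon (S : Finset ℤ) (c : ℤ → ℝ) : Set (ℝ × ℝ) :=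
  convexHull ℝ {p | ∃ l ∈ S, p = (c l, (l : ℝ))} + {q | ∃ t : ℝ, 0 ≤ t ∧ q = (t, 0)}

/-- The translate `P + (a, i)` of a subset of `ℝ²`. -/
def shiftSet (P : Set (ℝ × ℝ)) (a : ℝ) (i : ℤ) : Set (ℝ × ℝ) :=
  (fun p => (p.1 + a, p.2 + (i : ℝ))) '' P

/-- `U` lies above `Y = {(-y l, l) : l ∈ ℤ}` if every point `(v, l) ∈ U` with
integer second coordinate `l` satisfies `v ≥ -y l`. -/
def LiesAbove (y : ℤ → ℝ) (U : Set (ℝ × ℝ)) : Prop :=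
  ∀ (v : ℝ) (l : ℤ), (v, (l : ℝ)) ∈ U → -y l ≤ v

/-- The set `Y = {(-y l, l) : l ∈ ℤ} ⊆ ℝ²`. -/
def YSet (y : ℤ → ℝ) : Set (ℝ × ℝ) := {p | ∃ l : ℤ, p = (-y l, (l : ℝ))}

/-- `a` is the minimal real such that `P + (a, i)` lies above `Y`. -/
def IsMinimalLift (y : ℤ → ℝ) (P : Set (ℝ × ℝ)) (i : ℤ) (a : ℝ) : Prop :=
  LiesAbove y (shiftSet P a i) ∧ ∀ a' < a, ¬ LiesAbove y (shiftSet P a' i)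

open Set

lemma mem_shiftSet_iff {P : Set (ℝ × ℝ)} {b : ℝ} {i : ℤ} {p : ℝ × ℝ} :
    p ∈ shiftSet P b i ↔ (p.1 - b, p.2 - i) ∈ P := by
  constructor
  · rintro ⟨q, hq, rfl⟩
    simpa using hq
  · exact fun h => ⟨_, h, by simp⟩

lemma convex_newtonPolygon (S : Finset ℤ) (c : ℤ → ℝ) : Convex ℝ (NewtonPolygon S c) := by
  refine (convex_convexHull ℝ _).add ?_
  rintro _ ⟨s, hs, rfl⟩ _ ⟨t, ht, rfl⟩ α β hα hβ -
  exact ⟨α * s + β * t, by positivity, by simp⟩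

lemma exists_newtonPolygon_subset_snd_preimage_Icc (S : Finset ℤ) (c : ℤ → ℝ) :
    ∃ m M : ℤ, NewtonPolygon S c ⊆ Prod.snd ⁻¹' Icc (m : ℝ) M := by
  obtain ⟨m, hm⟩ := S.bddBelow
  obtain ⟨M, hM⟩ := S.bddAbove
  have hvert : {p : ℝ × ℝ | ∃ l ∈ S, p = (c l, (l : ℝ))} ⊆ Prod.snd ⁻¹' Icc (m : ℝ) M := by
    rintro _ ⟨l, hl, rfl⟩
    exact ⟨show (m : ℝ) ≤ l by exact_mod_cast hm hl, show (l : ℝ) ≤ M by exact_mod_cast hM hl⟩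
  have hhull :=
    convexHull_min hvert ((convex_Icc (m : ℝ) M).linear_preimage (LinearMap.snd ℝ ℝ ℝ))
  refine ⟨m, M, ?_⟩
  rintro _ ⟨u, hu, _, ⟨t, -, rfl⟩, rfl⟩
  simpa using hhull hu

/-- `(-y l, l)` is an extremal point of the translate `P + (a i, i)`. -/
def ExtremalAt (P : Set (ℝ × ℝ)) (y a : ℤ → ℝ) (i l : ℤ) : Prop :=
  (-y l, (l : ℝ)) ∈ shiftSet P (a i) i

def BelowChord (f : ℤ → ℝ) (l₁ l₂ l₃ : ℤ) : Prop :=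
  ((l₃ - l₁ : ℤ) : ℝ) * f l₂ ≤ ((l₃ - l₂ : ℤ) : ℝ) * f l₁ + ((l₂ - l₁ : ℤ) : ℝ) * f l₃

lemma BelowChord.of_left {f : ℤ → ℝ} {l₁ x l₂ l₃ : ℤ} (h₁ : l₁ < x) (hx : x < l₂) (h₃ : l₂ < l₃)
    (hl : BelowChord f l₁ x l₂) (hr : BelowChord f x l₂ l₃) : BelowChord f l₁ l₂ l₃ := by
  unfold BelowChord at *
  push_cast at *
  rify at h₁ hx h₃
  nlinarith [mul_le_mul_of_nonneg_left hl (sub_nonneg.2 h₃.le),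
    mul_le_mul_of_nonneg_left hr (sub_nonneg.2 (h₁.trans hx).le)]

lemma BelowChord.of_right {f : ℤ → ℝ} {l₁ l₂ x l₃ : ℤ} (h₁ : l₁ < l₂) (hx : l₂ < x) (h₃ : x < l₃)
    (hl : BelowChord f l₁ l₂ x) (hr : BelowChord f l₂ x l₃) : BelowChord f l₁ l₂ l₃ := by
  unfold BelowChord at *
  push_cast at *
  rify at h₁ hx h₃
  nlinarith [mul_le_mul_of_nonneg_left hl (sub_nonneg.2 (hx.trans h₃).le),
    mul_le_mul_of_nonneg_left hr (sub_nonneg.2 h₁.le)]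

theorem belowChord_of_belowChord_consecutive {f : ℤ → ℝ} {Λ : Set ℤ}
    (h : ∀ l₁ ∈ Λ, ∀ l₂ ∈ Λ, ∀ l₃ ∈ Λ, l₁ < l₂ → l₂ < l₃ →
      (∀ x ∈ Λ, l₁ < x → x < l₃ → x = l₂) → BelowChord f l₁ l₂ l₃)
    (l₁ l₂ l₃ : ℤ) (h₁ : l₁ ∈ Λ) (h₂ : l₂ ∈ Λ) (h₃ : l₃ ∈ Λ) (h12 : l₁ < l₂) (h23 : l₂ < l₃) :
    BelowChord f l₁ l₂ l₃ := by
  by_cases hx : ∃ x ∈ Λ, l₁ < x ∧ x < l₃ ∧ x ≠ l₂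
  · obtain ⟨x, hx, h1x, hx3, hne⟩ := hx
    rcases hne.lt_or_gt with hlt | hgt
    · exact .of_left h1x hlt h23
        (belowChord_of_belowChord_consecutive h l₁ x l₂ h₁ hx h₂ h1x hlt)
        (belowChord_of_belowChord_consecutive h x l₂ l₃ hx h₂ h₃ hlt h23)
    · exact .of_right h12 hgt hx3
        (belowChord_of_belowChord_consecutive h l₁ l₂ x h₁ h₂ hx h12 hgt)
        (belowChord_of_belowChord_consecutive h l₂ x l₃ h₂ hx h₃ hgt hx3)
  · push Not at hx
    exact h l₁ h₁ l₂ h₂ l₃ h₃ h12 h23 hx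
termination_by (l₃ - l₁).toNat

lemma LiesAbove.neg_le {y : ℤ → ℝ} {P : Set (ℝ × ℝ)} {b : ℝ} {i : ℤ}
    (h : LiesAbove y (shiftSet P b i)) {r : ℝ × ℝ} (hr : r ∈ P) {l : ℤ} (hl : r.2 = l - i) :
    -y l ≤ r.1 + b :=
  h _ l (mem_shiftSet_iff.2 (by simpa [← hl] using hr))

lemma LiesAbove.mul_neg_le {y : ℤ → ℝ} {P : Set (ℝ × ℝ)} {b : ℝ} {i : ℤ} (hP : Convex ℝ P)
    (h : LiesAbove y (shiftSet P b i)) {p q : ℝ × ℝ} (hp : p ∈ P) (hq : q ∈ P) {s t : ℝ}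
    (hs : 0 ≤ s) (ht : 0 ≤ t) (hst : 0 < s + t) {l : ℤ}
    (hl : s * p.2 + t * q.2 = (s + t) * (l - i)) :
    (s + t) * -y l ≤ s * p.1 + t * q.1 + (s + t) * b := by
  obtain ⟨r, hr, hrpq⟩ := hP.exists_mem_add_smul_eq hp hq hs ht
  have h₁ : (s + t) * r.1 = s * p.1 + t * q.1 := by simpa using congrArg Prod.fst hrpq
  have h₂ : (s + t) * r.2 = s * p.2 + t * q.2 := by simpa using congrArg Prod.snd hrpq
  calc (s + t) * -y l ≤ (s + t) * (r.1 + b) :=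
        mul_le_mul_of_nonneg_left (h.neg_le hr (mul_left_cancel₀ hst.ne' (h₂.trans hl))) hst.le
    _ = s * p.1 + t * q.1 + (s + t) * b := by rw [mul_add, h₁]

section Extremal

variable {P : Set (ℝ × ℝ)} {y a : ℤ → ℝ}

lemma extremalAt_iff {i l : ℤ} : ExtremalAt P y a i l ↔ (-y l - a i, (l : ℝ) - i) ∈ P :=
  mem_shiftSet_iff

theorem ExtremalAt.exchange (hP : Convex ℝ P) (hY : ∀ i, LiesAbove y (shiftSet P (a i) i))
    {u v i j : ℤ} (huv : u < v) (hji : j ≤ i) (hu : ExtremalAt P y a i u)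
    (hv : ExtremalAt P y a j v) : ExtremalAt P y a i v ∧ ExtremalAt P y a j u := by
  rw [extremalAt_iff] at hu hv
  rw [extremalAt_iff, extremalAt_iff]
  have hs : (0 : ℝ) ≤ i - j := sub_nonneg.2 (by exact_mod_cast hji)
  have ht : (0 : ℝ) < v - u := sub_pos.2 (by exact_mod_cast huv)
  have hst : ((i : ℝ) - j) + (v - u) ≠ 0 := by positivity
  obtain ⟨r, hr, hrpq⟩ := hP.exists_mem_add_smul_eq hu hv hs ht.le
  obtain ⟨r', hr', hr'pq⟩ := hP.exists_mem_add_smul_eq hu hv ht.le hs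
  simp only [Prod.ext_iff, Prod.smul_fst, Prod.smul_snd, Prod.fst_add, Prod.snd_add,
    smul_eq_mul] at hrpq hr'pq
  have hr₂ : r.2 = v - i := mul_left_cancel₀ hst (by linear_combination hrpq.2)
  have hr'₂ : r'.2 = u - j := mul_left_cancel₀ hst (by linear_combination hr'pq.2)
  -- `r + r' = p + q`, so the two lower bounds from `Y` add up to an equality
  have hsum : r.1 + r'.1 = -y u - a i + (-y v - a j) :=
    mul_left_cancel₀ hst (by linear_combination hrpq.1 + hr'pq.1)
  have hv' := (hY i).neg_le hr hr₂
  have hu' := (hY j).neg_le hr' hr'₂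
  have hr_eq : r = (-y v - a i, (v : ℝ) - i) := Prod.ext (by dsimp only; linarith) hr₂
  have hr'_eq : r' = (-y u - a j, (u : ℝ) - j) := Prod.ext (by dsimp only; linarith) hr'₂
  exact ⟨hr_eq ▸ hr, hr'_eq ▸ hr'⟩

theorem belowChord_of_extremalAt (hP : Convex ℝ P) (hY : ∀ i, LiesAbove y (shiftSet P (a i) i))
    {l₁ l₂ l₃ k d : ℤ} (h12 : l₁ < l₂) (h23 : l₂ < l₃) (hd₁ : d ≤ l₂ - l₁) (hd₃ : d ≤ l₃ - l₂)
    (h₁ : ExtremalAt P y a k l₁) (h₃ : ExtremalAt P y a (k + d) l₃) :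
    BelowChord (fun l => -y l) l₁ l₂ l₃ := by
  rw [extremalAt_iff] at h₁ h₃
  rify at h12 h23 hd₁ hd₃
  have h12 : (0 : ℝ) < l₂ - l₁ := by linarith
  have h23 : (0 : ℝ) < l₃ - l₂ := by linarith
  have hd₁ : (0 : ℝ) ≤ l₂ - l₁ - d := by linarith
  have hd₃ : (0 : ℝ) ≤ l₃ - d - l₂ := by linarith
  have I₁ := (hY k).mul_neg_le hP h₁ h₃ hd₃ h12.le (by linarith) (l := l₂) (by push_cast; ring)
  have I₂ := (hY (k + d)).mul_neg_le hP h₁ h₃ h23.le hd₁ (by linarith) (l := l₂)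
    (by push_cast; ring)
  unfold BelowChord
  push_cast at I₁ I₂ ⊢
  refine le_of_mul_le_mul_left ?_ (by linarith : (0 : ℝ) < l₃ - l₁ - d)
  linarith [mul_le_mul_of_nonneg_left I₁ h23.le, mul_le_mul_of_nonneg_left I₂ h12.le]

lemma ExtremalAt.index_mem_Icc {m M i l : ℤ} (hbdd : P ⊆ Prod.snd ⁻¹' Icc (m : ℝ) M)
    (h : ExtremalAt P y a i l) : i ∈ Icc (l - M) (l - m) := by
  obtain ⟨hm, hM⟩ : (m : ℝ) ≤ l - i ∧ (l : ℝ) - i ≤ M := hbdd (extremalAt_iff.1 h)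
  exact ⟨by linarith [show l - i ≤ M by exact_mod_cast hM],
    by linarith [show m ≤ l - i by exact_mod_cast hm]⟩

lemma exists_greatest_extremalAt {m M l : ℤ} (hbdd : P ⊆ Prod.snd ⁻¹' Icc (m : ℝ) M)
    (h : ∃ i, ExtremalAt P y a i l) :
    ∃ k, ExtremalAt P y a k l ∧ ∀ i, ExtremalAt P y a i l → i ≤ k :=
  Int.exists_greatest_of_bdd ⟨l - m, fun _ hi => (hi.index_mem_Icc hbdd).2⟩ h

lemma exists_least_extremalAt {m M l : ℤ} (hbdd : P ⊆ Prod.snd ⁻¹' Icc (m : ℝ) M)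
    (h : ∃ i, ExtremalAt P y a i l) :
    ∃ k, ExtremalAt P y a k l ∧ ∀ i, ExtremalAt P y a i l → k ≤ i :=
  Int.exists_least_of_bdd ⟨l - M, fun _ hi => (hi.index_mem_Icc hbdd).1⟩ h

lemma ExtremalAt.mem_Ioo_of_index_mem_Ioo (hP : Convex ℝ P)
    (hY : ∀ i, LiesAbove y (shiftSet P (a i) i)) {l₁ l₃ k₁ k₃ i z : ℤ}
    (hk₁ : ExtremalAt P y a k₁ l₁) (hk₁max : ∀ i, ExtremalAt P y a i l₁ → i ≤ k₁)
    (hk₃ : ExtremalAt P y a k₃ l₃) (hk₃min : ∀ i, ExtremalAt P y a i l₃ → k₃ ≤ i)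
    (hi : i ∈ Ioo k₁ k₃) (hz : ExtremalAt P y a i z) : z ∈ Ioo l₁ l₃ := by
  constructor
  · by_contra! hle
    have : ExtremalAt P y a i l₁ := by
      rcases hle.lt_or_eq with hlt | rfl
      · exact (ExtremalAt.exchange hP hY hlt hi.1.le hz hk₁).1
      · exact hz
    exact hi.1.not_ge (hk₁max i this)
  · by_contra! hle
    have : ExtremalAt P y a i l₃ := by
      rcases hle.lt_or_eq with hlt | rfl
      · exact (ExtremalAt.exchange hP hY hlt hi.2.le hk₃ hz).2
      · exact hz
    exact hi.2.not_ge (hk₃min i this)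

theorem belowChord_of_consecutive_extremal (hP : Convex ℝ P)
    (hY : ∀ i, LiesAbove y (shiftSet P (a i) i)) {m M : ℤ}
    (hbdd : P ⊆ Prod.snd ⁻¹' Icc (m : ℝ) M)
    (htwo : ∀ i : ℤ, ∃ p ∈ shiftSet P (a i) i ∩ YSet y, ∃ q ∈ shiftSet P (a i) i ∩ YSet y, p ≠ q)
    {l₁ l₂ l₃ : ℤ} (h₁ : ∃ i, ExtremalAt P y a i l₁) (h₃ : ∃ i, ExtremalAt P y a i l₃)
    (h12 : l₁ < l₂) (h23 : l₂ < l₃)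
    (honly : ∀ x, (∃ i, ExtremalAt P y a i x) → l₁ < x → x < l₃ → x = l₂) :
    BelowChord (fun l => -y l) l₁ l₂ l₃ := by
  obtain ⟨k₁, hk₁, hk₁max⟩ := exists_greatest_extremalAt hbdd h₁
  obtain ⟨k₃, hk₃, hk₃min⟩ := exists_least_extremalAt hbdd h₃
  rcases le_or_gt k₃ k₁ with hle | hlt
  · have hk₁₃ : ExtremalAt P y a (k₁ + 0) l₃ := by
      simpa using (ExtremalAt.exchange hP hY (h12.trans h23) hle hk₁ hk₃).1
    exact belowChord_of_extremalAt hP hY h12 h23 (by omega) (by omega) hk₁ hk₁₃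
  · obtain rfl : k₃ = k₁ + 1 := by
      by_contra hne
      obtain ⟨_, ⟨hz, z, rfl⟩, _, ⟨hz', z', rfl⟩, hzz'⟩ := htwo (k₁ + 1)
      have hk : k₁ + 1 ∈ Ioo k₁ k₃ := ⟨by omega, by omega⟩
      have hzI := ExtremalAt.mem_Ioo_of_index_mem_Ioo hP hY hk₁ hk₁max hk₃ hk₃min hk hz
      have hz'I := ExtremalAt.mem_Ioo_of_index_mem_Ioo hP hY hk₁ hk₁max hk₃ hk₃min hk hz'
      rw [honly z ⟨_, hz⟩ hzI.1 hzI.2, honly z' ⟨_, hz'⟩ hz'I.1 hz'I.2] at hzz'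
      exact hzz' rfl
    exact belowChord_of_extremalAt hP hY h12 h23 (by omega) (by omega) hk₁ hk₃

end Extremal

theorem extremal_polygon_convex_general
    (S : Finset ℤ) (c : ℤ → ℝ) (y : ℤ → ℝ) (a : ℤ → ℝ)
    (ha : ∀ i : ℤ, IsMinimalLift y (NewtonPolygon S c) i (a i))
    (htwo : ∀ i : ℤ, ∃ p ∈ shiftSet (NewtonPolygon S c) (a i) i ∩ YSet y,
      ∃ q ∈ shiftSet (NewtonPolygon S c) (a i) i ∩ YSet y, p ≠ q) :
    ∀ l₁ l₂ l₃ : ℤ,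
      (∃ i : ℤ, (-y l₁, (l₁ : ℝ)) ∈ shiftSet (NewtonPolygon S c) (a i) i) →
      (∃ i : ℤ, (-y l₂, (l₂ : ℝ)) ∈ shiftSet (NewtonPolygon S c) (a i) i) →
      (∃ i : ℤ, (-y l₃, (l₃ : ℝ)) ∈ shiftSet (NewtonPolygon S c) (a i) i) →
      l₁ < l₂ → l₂ < l₃ →
      ((l₃ - l₁ : ℤ) : ℝ) * (-y l₂) ≤
        ((l₃ - l₂ : ℤ) : ℝ) * (-y l₁) + ((l₂ - l₁ : ℤ) : ℝ) * (-y l₃) := by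
  obtain ⟨m, M, hbdd⟩ := exists_newtonPolygon_subset_snd_preimage_Icc S c
  have hY (i : ℤ) := (ha i).1
  intro l₁ l₂ l₃ h₁ h₂ h₃ h12 h23
  exact belowChord_of_belowChord_consecutive
    (Λ := {l | ∃ i, ExtremalAt (NewtonPolygon S c) y a i l})
    (fun _ h₁ _ _ _ h₃ h12 h23 honly => belowChord_of_consecutive_extremal
      (convex_newtonPolygon S c) hY hbdd htwo h₁ h₃ h12 h23 honly)
    l₁ l₂ l₃ h₁ h₂ h₃ h12 h23

/-- Convexity of the polygon of extremal points (Lemma 3): if every `P_i ∩ Y`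
contains at least two points, then on the set `Λ` of second coordinates of
extremal points the function `l ↦ -y l` is convex. -/
theorem extremal_polygon_convex
    (S : Finset ℤ) (hS : S.Nonempty) (c : ℤ → ℝ) (y : ℤ → ℝ) (a : ℤ → ℝ)
    (ha : ∀ i : ℤ, IsMinimalLift y (NewtonPolygon S c) i (a i))
    (htwo : ∀ i : ℤ, ∃ p ∈ shiftSet (NewtonPolygon S c) (a i) i ∩ YSet y,
      ∃ q ∈ shiftSet (NewtonPolygon S c) (a i) i ∩ YSet y, p ≠ q) :
    ∀ l₁ l₂ l₃ : ℤ,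
      (∃ i : ℤ, (-y l₁, (l₁ : ℝ)) ∈ shiftSet (NewtonPolygon S c) (a i) i) →
      (∃ i : ℤ, (-y l₂, (l₂ : ℝ)) ∈ shiftSet (NewtonPolygon S c) (a i) i) →
      (∃ i : ℤ, (-y l₃, (l₃ : ℝ)) ∈ shiftSet (NewtonPolygon S c) (a i) i) →
      l₁ < l₂ → l₂ < l₃ →
      ((l₃ - l₁ : ℤ) : ℝ) * (-y l₂) ≤
        ((l₃ - l₂ : ℤ) : ℝ) * (-y l₁) + ((l₂ - l₁ : ℤ) : ℝ) * (-y l₃) :=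
  extremal_polygon_convex_general S c y a ha htwo
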